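/- Let V ⊂ ℝⁿ be a nonempty compact set with 0 ∉ co(V). Suppose the pair (c*, r*), with c* ≠ 0, minimizes r/|c| over all pairs (c, r) with c ∈ ℝⁿ, r ≥ 0 such that the closed ball B(c, r) contains V. Set γ* := r*/|c*| and q* := (1 − (γ*)²)c*. Then q* is a global minimizer of q ↦ sup_{x ∈ V} |q − x|/|x| and the minimal value equals γ*. -/

import Mathlib

/-!
Completing the square gives `‖(1 - γ²) c - x‖² - γ²‖x‖² = (1 - γ²) (‖c - x‖² - γ²‖c‖²)`, so for
`0 ≤ γ < 1` the Apollonius region `{x | ‖q - x‖ ≤ γ‖x‖}` is the ball `B(q / (1 - γ²), γ‖q‖ / (1 - γ²))`,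
whose ratio radius / ‖center‖ is exactly `γ`. Separating `0` from the (compact) convex hull of `V`
by a hyperplane produces an enclosing ball with ratio `< 1`, so `γ* < 1`. Hence `(1 - γ*²) c*`
achieves weighted radius `≤ γ*`, and any `q` achieving weighted radius `s < 1` yields an enclosing
ball of ratio `s`, so `s ≥ γ*` by optimality.
-/

open Set Metric
open scoped RealInnerProductSpace

section ConvexHull

variable {E : Type*} [NormedAddCommGroup E] [NormedSpace ℝ E] [FiniteDimensional ℝ E]

/-- By Carathéodory, `convexHull ℝ V` is a finite union of continuous images of
`stdSimplex ℝ (Fin k) × Vᵏ`, `k ≤ finrank ℝ E + 1`. -/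
theorem IsCompact.convexHull {V : Set E} (hV : IsCompact V) : IsCompact (convexHull ℝ V) := by
  let K (k : ℕ) : Set E := (fun p : (Fin k → ℝ) × (Fin k → E) ↦ ∑ i, p.1 i • p.2 i) ''
    (stdSimplex ℝ (Fin k) ×ˢ univ.pi fun _ ↦ V)
  have hK (k : ℕ) : IsCompact (K k) :=
    ((isCompact_stdSimplex ℝ _).prod (isCompact_univ_pi fun _ ↦ hV)).image (by fun_prop)
  have hhull : _root_.convexHull ℝ V = ⋃ k ∈ Iic (Module.finrank ℝ E + 1), K k := by
    refine Subset.antisymm (fun x hx ↦ ?_) (iUnion₂_subset fun k _ ↦ ?_)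
    · obtain ⟨ι, _, z, w, hzV, hz, hw0, hw1, rfl⟩ := eq_pos_convex_span_of_mem_convexHull hx
      let e := (Fintype.equivFin ι).symm
      refine mem_biUnion (x := Fintype.card ι) ?_ ⟨(w ∘ e, z ∘ e), ⟨⟨fun i ↦ (hw0 _).le, ?_⟩,
        fun i _ ↦ hzV (mem_range_self _)⟩, e.sum_comp fun i ↦ w i • z i⟩
      · exact hz.card_le_finrank_succ.trans (Nat.succ_le_succ (Submodule.finrank_le _))
      · exact (e.sum_comp w).trans hw1
    · rintro _ ⟨⟨w, z⟩, ⟨⟨hw0, hw1⟩, hz⟩, rfl⟩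
      exact (convex_convexHull ℝ V).sum_mem (fun i _ ↦ hw0 i) hw1
        fun i _ ↦ subset_convexHull ℝ V (hz i (mem_univ i))
  rw [hhull]
  exact (finite_Iic _).isCompact_biUnion fun k _ ↦ hK k

end ConvexHull

section WeightedRadius

variable {E : Type*} [NormedAddCommGroup E] {V : Set E}

theorem ciSup_norm_sub_div_norm_le (hne : V.Nonempty) (h0V : 0 ∉ V) {q : E} {s : ℝ}
    (h : ∀ x ∈ V, ‖q - x‖ ≤ s * ‖x‖) : ⨆ x : V, ‖q - x‖ / ‖(x : E)‖ ≤ s :=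
  have := hne.to_subtype
  ciSup_le fun x ↦ (div_le_iff₀ (norm_pos_iff.2 (ne_of_mem_of_not_mem x.2 h0V))).2 (h x x.2)

theorem norm_sub_le_ciSup_mul_norm (hV : IsCompact V) (h0V : 0 ∉ V) (q : E) {x : E}
    (hx : x ∈ V) : ‖q - x‖ ≤ (⨆ y : V, ‖q - y‖ / ‖(y : E)‖) * ‖x‖ := by
  have hbdd := hV.bddAbove_image (f := fun y ↦ ‖q - y‖ / ‖y‖) <| ContinuousOn.div
    (by fun_prop) (by fun_prop) fun y hy ↦ norm_ne_zero_iff.2 (ne_of_mem_of_not_mem hy h0V)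
  rw [image_eq_range] at hbdd
  exact (div_le_iff₀ (norm_pos_iff.2 (ne_of_mem_of_not_mem hx h0V))).1 (le_ciSup hbdd ⟨x, hx⟩)

end WeightedRadius

section InnerProductSpace

variable {E : Type*} [NormedAddCommGroup E] [InnerProductSpace ℝ E]

theorem norm_one_sub_sq_smul_sub_sq_sub_sq (γ : ℝ) (c x : E) :
    ‖(1 - γ ^ 2) • c - x‖ ^ 2 - (γ * ‖x‖) ^ 2 =
      (1 - γ ^ 2) * (‖c - x‖ ^ 2 - (γ * ‖c‖) ^ 2) := by
  rw [norm_sub_sq_real, norm_sub_sq_real, norm_smul, real_inner_smul_left, mul_pow,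
    Real.norm_eq_abs, sq_abs]
  ring

theorem norm_one_sub_sq_smul_sub_le_iff {γ : ℝ} (hγ0 : 0 ≤ γ) (hγ1 : γ < 1) (c x : E) :
    ‖(1 - γ ^ 2) • c - x‖ ≤ γ * ‖x‖ ↔ x ∈ closedBall c (γ * ‖c‖) := by
  have hpos : 0 < 1 - γ ^ 2 := by nlinarith
  rw [mem_closedBall, dist_comm, dist_eq_norm, ← pow_le_pow_iff_left₀ (norm_nonneg _)
      (by positivity) two_ne_zero, ← pow_le_pow_iff_left₀ (norm_nonneg (c - x)) (by positivity)
      two_ne_zero, ← sub_nonpos, norm_one_sub_sq_smul_sub_sq_sub_sq, ← sub_nonpos (a := _ ^ 2)]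
  exact ⟨fun h ↦ nonpos_of_mul_nonpos_right h hpos, mul_nonpos_of_nonneg_of_nonpos hpos.le⟩

theorem setOf_norm_sub_le_mul_norm_eq_closedBall {γ : ℝ} (hγ0 : 0 ≤ γ) (hγ1 : γ < 1) (q : E) :
    {x | ‖q - x‖ ≤ γ * ‖x‖} = closedBall ((1 - γ ^ 2)⁻¹ • q) (γ * ‖q‖ / (1 - γ ^ 2)) := by
  have hpos : 0 < 1 - γ ^ 2 := by nlinarith
  ext x
  have h := norm_one_sub_sq_smul_sub_le_iff hγ0 hγ1 ((1 - γ ^ 2)⁻¹ • q) x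
  rwa [smul_inv_smul₀ hpos.ne', norm_smul, Real.norm_of_nonneg (inv_pos.2 hpos).le,
    ← mul_assoc, ← div_eq_mul_inv, div_mul_eq_mul_div] at h

theorem exists_pos_lt_inner_of_zero_notMem_convexHull [FiniteDimensional ℝ E] {V : Set E}
    (hV : IsCompact V) (h0 : 0 ∉ convexHull ℝ V) : ∃ w : E, ∃ u > 0, ∀ x ∈ V, u < ⟪w, x⟫ := by
  obtain ⟨f, u, hf0, hfu⟩ :=
    geometric_hahn_banach_point_closed (convex_convexHull ℝ V) hV.convexHull.isClosed h0
  refine ⟨(InnerProductSpace.toDual ℝ E).symm f, u, by simpa using hf0, fun x hx ↦ ?_⟩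
  rw [InnerProductSpace.toDual_symm_apply]
  exact hfu x (subset_convexHull ℝ V hx)

def enclosingBallRatios (V : Set E) : Set ℝ :=
  {γ | ∃ c r, c ≠ 0 ∧ 0 ≤ r ∧ V ⊆ closedBall c r ∧ r / ‖c‖ = γ}

variable {V : Set E}

/-- A large multiple `t • w` of the normal of a separating hyperplane is the center. -/
theorem exists_lt_one_mem_enclosingBallRatios (hne : V.Nonempty) (hbdd : Bornology.IsBounded V)
    {w : E} {u : ℝ} (hu : 0 < u) (hw : ∀ x ∈ V, u < ⟪w, x⟫) :
    ∃ γ ∈ enclosingBallRatios V, γ < 1 := by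
  obtain ⟨M, hM⟩ := hbdd.exists_norm_le
  have hw0 : w ≠ 0 := by
    rintro rfl
    obtain ⟨x, hx⟩ := hne
    simpa using (hw x hx).trans' hu
  set t := (M ^ 2 + 1) / u
  have ht : 0 < t := by positivity
  have htu : t * u = M ^ 2 + 1 := div_mul_cancel₀ _ hu.ne'
  have hc : 0 < ‖t • w‖ := norm_pos_iff.2 (smul_ne_zero ht.ne' hw0)
  have hsub : V ⊆ closedBall (t • w) √(‖t • w‖ ^ 2 - t * u) := fun x hx ↦ by
    have hsq : ‖x - t • w‖ ^ 2 ≤ ‖t • w‖ ^ 2 - t * u := by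
      rw [norm_sub_sq_real, real_inner_smul_right, real_inner_comm]
      nlinarith [hw x hx, hM x hx, norm_nonneg x]
    rw [mem_closedBall, dist_eq_norm, ← abs_norm]
    exact Real.abs_le_sqrt hsq
  refine ⟨_, ⟨_, _, norm_pos_iff.1 hc, Real.sqrt_nonneg _, hsub, rfl⟩, (div_lt_one hc).2 ?_⟩
  exact (Real.sqrt_lt' hc).2 (by linarith [mul_pos ht hu])

theorem mem_enclosingBallRatios_of_forall_norm_sub_le {q : E} (hq : q ≠ 0) {s : ℝ} (hs0 : 0 ≤ s)
    (hs1 : s < 1) (h : ∀ x ∈ V, ‖q - x‖ ≤ s * ‖x‖) : s ∈ enclosingBallRatios V := by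
  have hpos : 0 < 1 - s ^ 2 := by nlinarith
  refine ⟨(1 - s ^ 2)⁻¹ • q, s * ‖q‖ / (1 - s ^ 2), smul_ne_zero (inv_ne_zero hpos.ne') hq,
    by positivity,
    by rw [← setOf_norm_sub_le_mul_norm_eq_closedBall hs0 hs1 q]; exact h, ?_⟩
  have hq' : ‖q‖ ≠ 0 := norm_ne_zero_iff.2 hq
  rw [norm_smul, Real.norm_of_nonneg (inv_pos.2 hpos).le]
  field_simp

theorem le_of_mem_lowerBounds_enclosingBallRatios {γ : ℝ}
    (hγ : γ ∈ lowerBounds (enclosingBallRatios V)) (hγ1 : γ < 1) (hne : V.Nonempty)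
    (h0V : 0 ∉ V) {q : E} {s : ℝ} (hs0 : 0 ≤ s) (h : ∀ x ∈ V, ‖q - x‖ ≤ s * ‖x‖) : γ ≤ s := by
  obtain hs1 | hs1 := lt_or_ge s 1
  · obtain ⟨x, hx⟩ := hne
    have hq : q ≠ 0 := by
      rintro rfl
      have hx0 := norm_pos_iff.2 (ne_of_mem_of_not_mem hx h0V)
      have hx1 : ‖x‖ ≤ s * ‖x‖ := by simpa using h x hx
      nlinarith
    exact hγ (mem_enclosingBallRatios_of_forall_norm_sub_le hq hs0 hs1 h)
  · exact hγ1.le.trans hs1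

end InnerProductSpace

/-- equivalence of the radially weighted 1-center problem with the
optimal enclosing-sphere problem: if `(c, r)` minimizes `r/|c|` among spheres
enclosing `V`, then `q* = (1 - γ*²) c` with `γ* = r/|c|` is a global minimizer of
`q ↦ sup_{x ∈ V} |q - x|/|x|`, with minimal value `γ*`. -/
theorem stmt_11 {n : ℕ} (V : Set (EuclideanSpace ℝ (Fin n)))
    (hV : IsCompact V) (hne : V.Nonempty)
    (h0 : (0 : EuclideanSpace ℝ (Fin n)) ∉ convexHull ℝ V)
    (c : EuclideanSpace ℝ (Fin n)) (r : ℝ) (hc : c ≠ 0) (hr : 0 ≤ r)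
    (hball : V ⊆ Metric.closedBall c r)
    (hopt : ∀ (c' : EuclideanSpace ℝ (Fin n)) (r' : ℝ), c' ≠ 0 → 0 ≤ r' →
      V ⊆ Metric.closedBall c' r' → r / ‖c‖ ≤ r' / ‖c'‖) :
    (⨆ x : V, ‖(1 - (r / ‖c‖) ^ 2) • c - (x : EuclideanSpace ℝ (Fin n))‖ /
        ‖(x : EuclideanSpace ℝ (Fin n))‖) = r / ‖c‖ ∧
    ∀ q : EuclideanSpace ℝ (Fin n),
      (⨆ x : V, ‖(1 - (r / ‖c‖) ^ 2) • c - (x : EuclideanSpace ℝ (Fin n))‖ /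
          ‖(x : EuclideanSpace ℝ (Fin n))‖) ≤
        ⨆ x : V, ‖q - (x : EuclideanSpace ℝ (Fin n))‖ /
          ‖(x : EuclideanSpace ℝ (Fin n))‖ := by
  have h0V : 0 ∉ V := fun h ↦ h0 (subset_convexHull ℝ V h)
  have hlow : r / ‖c‖ ∈ lowerBounds (enclosingBallRatios V) := by
    rintro _ ⟨c', r', hc', hr', hV', rfl⟩
    exact hopt c' r' hc' hr' hV'
  have hγ1 : r / ‖c‖ < 1 := by
    obtain ⟨w, u, hu, hw⟩ := exists_pos_lt_inner_of_zero_notMem_convexHull hV h0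
    obtain ⟨γ, hγ, hγ1⟩ := exists_lt_one_mem_enclosingBallRatios hne hV.isBounded hu hw
    exact (hlow hγ).trans_lt hγ1
  have lower (q) : r / ‖c‖ ≤
      ⨆ x : V, ‖q - (x : EuclideanSpace ℝ (Fin n))‖ / ‖(x : EuclideanSpace ℝ (Fin n))‖ :=
    le_of_mem_lowerBounds_enclosingBallRatios hlow hγ1 hne h0V
      (Real.iSup_nonneg fun _ ↦ by positivity) fun _ ↦ norm_sub_le_ciSup_mul_norm hV h0V q
  have upper := ciSup_norm_sub_div_norm_le hne h0V fun x hx ↦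
    (norm_one_sub_sq_smul_sub_le_iff (by positivity) hγ1 c x).2 <| by
      rw [div_mul_cancel₀ r (norm_ne_zero_iff.2 hc)]
      exact hball hx
  exact ⟨upper.antisymm (lower _), fun q ↦ upper.trans (lower q)⟩
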